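/- Suppose for every pair of vertices u, v of an edge-weighted graph G with dist_G(u, v) ≤ Δ there exists a u–v path of length at most β·Δ that intersects at most τ clusters of a partition ℂ, where within each cluster any two vertices are within G-distance Δ. Then for any u, v with dist_G(u, v) ≤ ζ·Δ (ζ a positive integer), under the additional assumption that some shortest u–v path uses only edges of weight less than ζ·Δ, there is a u–v path intersecting at most ζ·τ clusters of ℂ and of length at most ζ·β·Δ + (ζ−1)·ζΔ. -/

import Mathlib

open scoped BigOperators ENNReal

/-- Length of a walk (given as a list of vertices) under edge-weight `w`. -/
noncomputable def walkLen {V : Type*} (w : V → V → ℝ) : List V → ℝ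
  | [] => 0
  | [_] => 0
  | a :: b :: l => w a b + walkLen w (b :: l)

/-- `l` is a walk from `u` to `v` in the graph with edge relation `E`. -/
def IsWalk {V : Type*} (E : V → V → Prop) (u v : V) (l : List V) : Prop :=
  l.head? = some u ∧ l.getLast? = some v ∧ l.Chain' E

/-- Shortest-path distance in an edge-weighted graph. -/
noncomputable def gdist {V : Type*} (E : V → V → Prop) (w : V → V → ℝ) (u v : V) : ℝ :=
  sInf {L | ∃ l, IsWalk E u v l ∧ walkLen w l = L}

/-- Shortest-path distance from a vertex to a set of vertices. -/
noncomputable def gdistK {V : Type*} (E : V → V → Prop) (w : V → V → ℝ) (K : Set V) (v : V) : ℝ :=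
  sInf {L | ∃ t ∈ K, ∃ l, IsWalk E v t l ∧ walkLen w l = L}

/-- Shortest-path distance, valued in `ℝ≥0∞` (so `⊤` if there is no walk). -/
noncomputable def gdistE {V : Type*} (E : V → V → Prop) (w : V → V → ℝ) (u v : V) : ℝ≥0∞ :=
  ⨅ l : {l : List V // IsWalk E u v l}, ENNReal.ofReal (walkLen w l.1)

section helpers
variable {V : Type*} (w : V → V → ℝ)

lemma walkLen_nonneg (hw : ∀ a b, 0 ≤ w a b) : ∀ l : List V, 0 ≤ walkLen w l
  | [] => le_refl _
  | [_] => le_refl _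
  | a :: b :: l => by
      have h := walkLen_nonneg hw (b :: l)
      simp only [walkLen]
      exact add_nonneg (hw a b) h

lemma walkLen_cons_head? {l : List V} {a b : V} (h : l.head? = some b) :
    walkLen w (a :: l) = w a b + walkLen w l := by
  cases l with
  | nil => simp at h
  | cons c t => simp only [List.head?_cons, Option.some.injEq] at h; subst h; rfl

lemma walkLen_append (x y : V) : ∀ (l₁ l₂ : List V),
    walkLen w ((l₁ ++ [x]) ++ (y :: l₂)) =
      walkLen w (l₁ ++ [x]) + w x y + walkLen w (y :: l₂) := by
  intro l₁ l₂
  induction l₁ with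
  | nil => simp [walkLen]
  | cons a t ih =>
      cases t with
      | nil => simp [walkLen]; ring
      | cons c t' =>
          have e1 : walkLen w ((a :: c :: t' ++ [x]) ++ (y :: l₂))
              = w a c + walkLen w ((c :: t' ++ [x]) ++ (y :: l₂)) := rfl
          have e2 : walkLen w (a :: c :: t' ++ [x])
              = w a c + walkLen w (c :: t' ++ [x]) := rfl
          rw [e1, ih, e2]; ring

lemma chain'_of_zip (R : V → V → Prop) :
    ∀ l : List V, (∀ p ∈ l.zip l.tail, R p.1 p.2) → l.Chain' R
  | [] => fun _ => List.isChain_nil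
  | [_] => fun _ => List.isChain_singleton _
  | a :: b :: t => by
      intro h
      unfold List.Chain'; rw [List.isChain_cons_cons]
      exact ⟨h (a, b) (by simp), chain'_of_zip R (b :: t) fun p hp => h p (by
        simp only [List.tail_cons] at hp ⊢
        exact List.mem_cons_of_mem _ hp)⟩

/-- the split lemma -/
lemma walk_split :
    ∀ (l : List V) (t : ℝ), 0 ≤ t → t < walkLen w l →
      ∃ Q x y R, l = (Q ++ [x]) ++ (y :: R) ∧ walkLen w (Q ++ [x]) ≤ t ∧
        t < walkLen w (Q ++ [x]) + w x y
  | [], t, ht, hlt => absurd hlt (by simp [walkLen]; exact ht)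
  | [a], t, ht, hlt => absurd hlt (by simp [walkLen]; exact ht)
  | a :: c :: L, t, ht, hlt => by
      by_cases hac : t < w a c
      · exact ⟨[], a, c, L, by simp, by simp [walkLen]; exact ht, by simpa [walkLen] using hac⟩
      · push_neg at hac
        have h1 : walkLen w (a :: c :: L) = w a c + walkLen w (c :: L) := rfl
        obtain ⟨Q, x, y, R, heq, hle, hgt⟩ :=
          walk_split (c :: L) (t - w a c) (by linarith) (by rw [h1] at hlt; linarith)
        refine ⟨a :: Q, x, y, R, by simpa using congrArg (a :: ·) heq, ?_, ?_⟩
        · have hh : (Q ++ [x]).head? = some c := by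
            have : ((Q ++ [x]) ++ (y :: R)).head? = some c := by rw [← heq]; rfl
            cases Q <;> simpa using this
          rw [show (a :: Q) ++ [x] = a :: (Q ++ [x]) by simp, walkLen_cons_head? w hh]
          linarith
        · have hh : (Q ++ [x]).head? = some c := by
            have : ((Q ++ [x]) ++ (y :: R)).head? = some c := by rw [← heq]; rfl
            cases Q <;> simpa using this
          rw [show (a :: Q) ++ [x] = a :: (Q ++ [x]) by simp, walkLen_cons_head? w hh]
          linarith

end helpers

section key
variable {V ι : Type*} (E : V → V → Prop) (w : V → V → ℝ)

lemma gdist_le_walkLen (hw : ∀ a b, 0 ≤ w a b) {a b : V} {P : List V}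
    (hP : IsWalk E a b P) :
    sInf {L | ∃ l, IsWalk E a b l ∧ walkLen w l = L} ≤ walkLen w P := by
  apply csInf_le
  · exact ⟨0, fun L hL => by obtain ⟨l, -, h⟩ := hL; exact h ▸ walkLen_nonneg w hw l⟩
  · exact ⟨P, hP, rfl⟩

lemma cluster_set_eq (cl : V → ι) (l : List V) :
    {c : ι | ∃ z ∈ l, cl z = c} = cl '' {z | z ∈ l} := by
  ext c; simp [Set.mem_image]

lemma key_lemma (hw : ∀ a b, 0 ≤ w a b) (Δ : ℝ) (hΔ : 0 < Δ)
    (β : ℝ) (hβ : 1 ≤ β) (τ : ℕ) (cl : V → ι)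
    (hscat : ∀ u v : V, sInf {L | ∃ l, IsWalk E u v l ∧ walkLen w l = L} ≤ Δ →
      ∃ π, IsWalk E u v π ∧ walkLen w π ≤ β * Δ ∧
        {c : ι | ∃ z ∈ π, cl z = c}.ncard ≤ τ)
    (Wt : ℝ) (hWt : 0 < Wt) :
    ∀ n : ℕ, 1 ≤ n → ∀ a b : V, ∀ P : List V, IsWalk E a b P →
      P.Chain' (fun p q => w p q < Wt) → walkLen w P ≤ (n : ℝ) * Δ →
      ∃ π, IsWalk E a b π ∧ {c : ι | ∃ z ∈ π, cl z = c}.ncard ≤ n * τ ∧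
        walkLen w π ≤ (n : ℝ) * β * Δ + ((n : ℝ) - 1) * Wt := by
  have direct : ∀ a b : V, ∀ P : List V, IsWalk E a b P → walkLen w P ≤ Δ →
      ∃ π, IsWalk E a b π ∧ walkLen w π ≤ β * Δ ∧
        {c : ι | ∃ z ∈ π, cl z = c}.ncard ≤ τ := fun a b P hP hlen =>
    hscat a b (le_trans (gdist_le_walkLen E w hw hP) hlen)
  intro n hn
  induction n, hn using Nat.le_induction with
  | base =>
      intro a b P hP _ hlen
      obtain ⟨π, h1, h2, h3⟩ := direct a b P hP (by simpa using hlen)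
      exact ⟨π, h1, by simpa using h3, by push_cast; linarith⟩
  | succ n hn ih =>
      intro a b P hP hchain hlen
      by_cases hle : walkLen w P ≤ Δ
      · obtain ⟨π, h1, h2, h3⟩ := direct a b P hP hle
        refine ⟨π, h1, le_trans h3 (Nat.le_mul_of_pos_left τ (Nat.succ_pos n)), ?_⟩
        have hn' : (0:ℝ) ≤ (n:ℝ) := Nat.cast_nonneg n
        have e1 : (0:ℝ) ≤ (n:ℝ) * (β * Δ) :=
          mul_nonneg hn' (mul_nonneg (by linarith) hΔ.le)
        have e2 : (0:ℝ) ≤ (n:ℝ) * Wt := mul_nonneg hn' hWt.le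
        push_cast
        nlinarith
      · push_neg at hle
        obtain ⟨Q, x, y, R, heq, hQle, hQgt⟩ := walk_split w P Δ hΔ.le hle
        obtain ⟨hhead, hlast, hchE⟩ := hP
        rw [heq] at hhead hlast hchE hlen hchain
        rw [walkLen_append] at hlen
        -- basic structure facts
        obtain ⟨h0, hh0⟩ : ∃ h0, (Q ++ [x]).head? = some h0 := by cases Q <;> simp
        have hheadQ : (Q ++ [x]).head? = some a := by
          rw [List.head?_append, hh0] at hhead
          simp only [Option.some_or] at hhead  -- hhead : some h0 = some a
          rw [hh0, hhead]
        have hlastR : (y :: R).getLast? = some b := by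
          obtain ⟨g, hg⟩ : ∃ g, (y :: R).getLast? = some g := by
            cases h : (y :: R).getLast? with
            | none => simp [List.getLast?_eq_none_iff] at h
            | some g => exact ⟨g, rfl⟩
          rw [List.getLast?_append, hg] at hlast
          simp only [Option.some_or] at hlast
          rw [hg, hlast]
        unfold List.Chain' at hchE hchain; rw [List.isChain_append] at hchE hchain
        have hE : E x y := hchE.2.2 x (by simp [List.getLast?_concat]) y rfl
        have hwxy : w x y < Wt := hchain.2.2 x (by simp [List.getLast?_concat]) y rfl
        have walk1 : IsWalk E a x (Q ++ [x]) :=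
          ⟨hheadQ, List.getLast?_concat (l := Q), hchE.1⟩
        have walk2 : IsWalk E y b (y :: R) := ⟨rfl, hlastR, hchE.2.1⟩
        -- first piece via hscat
        obtain ⟨π₁, hπ₁, hπ₁len, hπ₁cl⟩ := direct a x (Q ++ [x]) walk1 hQle
        -- second piece via ih
        have hR0 : 0 ≤ walkLen w (y :: R) := walkLen_nonneg w hw _
        have len2 : walkLen w (y :: R) ≤ (n : ℝ) * Δ := by push_cast at hlen ⊢; linarith
        obtain ⟨π₂, hπ₂, hπ₂cl, hπ₂len⟩ := ih y b (y :: R) walk2 hchain.2.1 len2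
        -- combine
        obtain ⟨π₁', hπ₁'⟩ := List.getLast?_eq_some_iff.1 hπ₁.2.1
        obtain ⟨π₂', hπ₂'⟩ : ∃ t, π₂ = y :: t := by
          cases π₂ with
          | nil => simp [IsWalk] at hπ₂
          | cons z t => obtain ⟨h, -⟩ := hπ₂; simp only [List.head?_cons,
              Option.some.injEq] at h; exact ⟨t, by rw [h]⟩
        refine ⟨π₁ ++ π₂, ⟨?_, ?_, ?_⟩, ?_, ?_⟩
        · rw [List.head?_append, hπ₁.1]; rfl
        · rw [List.getLast?_append, hπ₂.2.1]; rfl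
        · unfold List.Chain'; rw [List.isChain_append]
          refine ⟨hπ₁.2.2, hπ₂.2.2, fun p hp q hq => ?_⟩
          rw [hπ₁.2.1] at hp; rw [hπ₂.1] at hq
          simp only [Option.mem_def, Option.some.injEq] at hp hq
          rw [← hp, ← hq]; exact hE
        · -- cluster count
          have hset : {c : ι | ∃ z ∈ π₁ ++ π₂, cl z = c}
              = {c : ι | ∃ z ∈ π₁, cl z = c} ∪ {c : ι | ∃ z ∈ π₂, cl z = c} := by
            ext c
            simp only [List.mem_append, Set.mem_union, Set.mem_setOf_eq]
            constructor
            · rintro ⟨z, hz | hz, hc⟩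
              · exact Or.inl ⟨z, hz, hc⟩
              · exact Or.inr ⟨z, hz, hc⟩
            · rintro (⟨z, hz, hc⟩ | ⟨z, hz, hc⟩)
              · exact ⟨z, Or.inl hz, hc⟩
              · exact ⟨z, Or.inr hz, hc⟩
          rw [hset]
          calc _ ≤ _ := Set.ncard_union_le _ _
            _ ≤ τ + n * τ := Nat.add_le_add hπ₁cl hπ₂cl
            _ = (n + 1) * τ := by ring
        · rw [hπ₁', hπ₂', walkLen_append]
          rw [← hπ₁', ← hπ₂']
          push_cast at hπ₂len ⊢
          linarith

end key

/-- from a `β`-approximate `(τ,Δ)`-scattering property, any pair at distance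
`≤ ζΔ` (whose shortest path uses only edges of weight `< ζΔ`) admits a path intersecting at
most `ζτ` clusters of length at most `ζβΔ + (ζ-1)·ζΔ`. -/
theorem stmt_16 {V ι : Type*} (E : V → V → Prop) (w : V → V → ℝ)
    (hw : ∀ a b, 0 ≤ w a b) (Δ : ℝ) (hΔ : 0 < Δ)
    (β : ℝ) (hβ : 1 ≤ β) (τ : ℕ) (cl : V → ι)
    (hdiam : ∀ x y : V, cl x = cl y → gdist E w x y ≤ Δ)
    (hscat : ∀ u v : V, gdist E w u v ≤ Δ →
      ∃ π, IsWalk E u v π ∧ walkLen w π ≤ β * Δ ∧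
        {c : ι | ∃ z ∈ π, cl z = c}.ncard ≤ τ)
    (ζ : ℕ) (hζ : 1 ≤ ζ) (u v : V)
    (huv : gdist E w u v ≤ (ζ : ℝ) * Δ)
    (hpath : ∃ P, IsWalk E u v P ∧ walkLen w P = gdist E w u v ∧
      ∀ p ∈ P.zip P.tail, w p.1 p.2 < (ζ : ℝ) * Δ) :
    ∃ π, IsWalk E u v π ∧ {c : ι | ∃ z ∈ π, cl z = c}.ncard ≤ ζ * τ ∧
      walkLen w π ≤ (ζ : ℝ) * β * Δ + ((ζ : ℝ) - 1) * ((ζ : ℝ) * Δ) := by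
  obtain ⟨P, hPwalk, hPlen, hPedges⟩ := hpath
  have hchain : P.Chain' (fun p q => w p q < (ζ : ℝ) * Δ) :=
    chain'_of_zip _ P hPedges
  have hζ' : (0:ℝ) < (ζ : ℝ) := by exact_mod_cast Nat.lt_of_lt_of_le Nat.zero_lt_one hζ
  have hWt : 0 < (ζ : ℝ) * Δ := mul_pos hζ' hΔ
  have hlen : walkLen w P ≤ (ζ : ℝ) * Δ := by rw [hPlen]; exact huv
  exact key_lemma E w hw Δ hΔ β hβ τ cl hscat ((ζ : ℝ) * Δ) hWt ζ hζ u v P hPwalk hchain hlen
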